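/- arXiv:2508.17559 — 4 statements merged into one kernel-verified Lean document; each statement's English description precedes it below -/
import Mathlib

section
/- Let n ≥ 2k, a = ⌈n/k⌉, and let v₁,…,v_a be k-subsets of {1,…,n} whose union is {1,…,n}. If b is a real number and x is a k-subset with |x ∩ v_i| < k − b + i for all i = 1,…,a, then k < a(k−b) + a(a+1)/2; moreover if b = (1−1/a)k + (a+1)/2 this is a contradiction, i.e., no such x exists. -/
open Finset

/-- A burning sequence of length `b`: vertex `v i` is burned at time `i+1`,
so it covers the ball of radius `b - (i+1)` by time `b`. -/
def IsBurningSeq {V : Type*} (G : SimpleGraph V) {b : ℕ} (v : Fin b → V) : Prop :=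
  ∀ x : V, ∃ i : Fin b, G.dist (v i) x ≤ b - 1 - (i : ℕ)

/-- The burning number of a graph: the least length of a burning sequence. -/
noncomputable def burningNumber {V : Type*} (G : SimpleGraph V) : ℕ :=
  sInf {b | ∃ v : Fin b → V, IsBurningSeq G v}

/-- The hypercube graph `Q_n` on `{0,1}^n`: adjacency is Hamming distance one. -/
def cubeGraph (n : ℕ) : SimpleGraph (Fin n → Bool) where
  Adj x y := hammingDist x y = 1
  symm := ⟨fun x y h => by (try dsimp only at h ⊢); rwa [hammingDist_comm]⟩
  loopless := ⟨fun x h => by (try dsimp only at h); simp [hammingDist_self] at h⟩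

/-- The Hamming graph `H(n,q)` on `[q]^n`: adjacency is Hamming distance one. -/
def hammingGraph (n q : ℕ) : SimpleGraph (Fin n → Fin q) where
  Adj x y := hammingDist x y = 1
  symm := ⟨fun x y h => by (try dsimp only at h ⊢); rwa [hammingDist_comm]⟩
  loopless := ⟨fun x h => by (try dsimp only at h); simp [hammingDist_self] at h⟩

/-- The Johnson graph `J(n,k)` on `k`-subsets of `[n]`. -/
def johnsonGraph (n k : ℕ) : SimpleGraph {s : Finset (Fin n) // s.card = k} where
  Adj u v := u ≠ v ∧ (u.1 ∩ v.1).card = k - 1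
  symm := ⟨by rintro u v ⟨h1, h2⟩; exact ⟨h1.symm, by rwa [Finset.inter_comm]⟩⟩
  loopless := ⟨by rintro u ⟨h1, -⟩; exact h1 rfl⟩

/-- The halved `n`-cube on even-weight vectors of `F₂^n`: adjacency is Hamming distance two. -/
def halvedCubeGraph (n : ℕ) : SimpleGraph {x : Fin n → ZMod 2 // ∑ i, x i = 0} where
  Adj x y := hammingDist x.1 y.1 = 2
  symm := ⟨fun x y h => by (try dsimp only at h ⊢); rwa [hammingDist_comm]⟩
  loopless := ⟨fun x h => by (try dsimp only at h); simp [hammingDist_self] at h⟩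

/-- The cycle `C_n` on `ℤ_n`. -/
def cycleGraphZMod (n : ℕ) : SimpleGraph (ZMod n) where
  Adj x y := x ≠ y ∧ (x - y = 1 ∨ y - x = 1)
  symm := ⟨by rintro x y ⟨h1, h2⟩; exact ⟨h1.symm, h2.symm⟩⟩
  loopless := ⟨by rintro x ⟨h1, -⟩; exact h1 rfl⟩

theorem Finset.card_le_sum_card_inter_of_forall_mem {α ι : Type*} [DecidableEq α] [Fintype ι]
    {s : Finset α} {v : ι → Finset α} (hcover : ∀ m ∈ s, ∃ i, m ∈ v i) :
    #s ≤ ∑ i, #(s ∩ v i) :=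
  calc #s ≤ #(univ.biUnion fun i ↦ s ∩ v i) := card_le_card fun m hm ↦ by
        obtain ⟨i, hi⟩ := hcover m hm
        exact mem_biUnion.2 ⟨i, mem_univ i, mem_inter.2 ⟨hm, hi⟩⟩
    _ ≤ ∑ i, #(s ∩ v i) := card_biUnion_le

theorem Fin.sum_val_add_one {K : Type*} [Field K] [CharZero K] (a : ℕ) :
    ∑ i : Fin a, (((i : ℕ) : K) + 1) = a * (a + 1) / 2 := by
  induction a with
  | zero => simp
  | succ a ih =>
    rw [Fin.sum_univ_castSucc]
    simp only [Fin.val_castSucc, ih, Fin.val_last]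
    push_cast
    ring

theorem lt_of_le_sum_of_lt_add_val {K : Type*} [Field K] [LinearOrder K] [IsStrictOrderedRing K]
    {a : ℕ} [NeZero a] {k c : K} {f : Fin a → K}
    (hk : k ≤ ∑ i, f i) (hf : ∀ i, f i < c + ((i : ℕ) + 1)) :
    k < a * c + a * (a + 1) / 2 :=
  calc k ≤ ∑ i, f i := hk
    _ < ∑ i : Fin a, (c + ((i : ℕ) + 1)) := sum_lt_sum_of_nonempty univ_nonempty fun i _ ↦ hf i
    _ = a * c + a * (a + 1) / 2 := by
      rw [sum_add_distrib, sum_const, card_univ, Fintype.card_fin, nsmul_eq_mul, Fin.sum_val_add_one]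

theorem mul_sub_add_eq_of_eq {K : Type*} [Field K] {a k b : K} (ha : a ≠ 0) (hb : b = (1 - 1 / a) * k + (a + 1) / 2) :
    a * (k - b) + a * (a + 1) / 2 = k := by
  subst hb
  field_simp
  ring

theorem johnson_unburned_contradiction_general (n k : ℕ) (hk : 1 ≤ k)
    (a : ℕ)
    (v : Fin a → Finset (Fin n))
    (hcover : ∀ m : Fin n, ∃ i, m ∈ v i)
    (b : ℝ) (x : Finset (Fin n)) (hx : x.card = k)
    (hlt : ∀ i : Fin a, ((x ∩ v i).card : ℝ) < k - b + ((i : ℕ) + 1)) :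
    (k : ℝ) < a * (k - b) + a * (a + 1) / 2 ∧
      (b = (1 - 1 / (a : ℝ)) * k + ((a : ℝ) + 1) / 2 → False) := by
  have hsum : k ≤ ∑ i, #(x ∩ v i) :=
    hx ▸ card_le_sum_card_inter_of_forall_mem fun m _ ↦ hcover m
  have : NeZero a := ⟨by rintro rfl; simp only [univ_eq_empty, sum_empty] at hsum; omega⟩
  have hmain : (k : ℝ) < a * (k - b) + a * (a + 1) / 2 :=
    lt_of_le_sum_of_lt_add_val (by exact_mod_cast hsum) hlt
  exact ⟨hmain, fun hb ↦ (mul_sub_add_eq_of_eq (NeZero.ne (a : ℝ)) hb ▸ hmain).false⟩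

/-- If `v₁, …, v_a` are `k`-subsets of `[n]` covering `[n]` (`a = ⌈n/k⌉`),
`b : ℝ`, and `x` is a `k`-subset with `|x ∩ v_i| < k - b + i` for all `i = 1, …, a`, then
`k < a(k - b) + a(a+1)/2`; and if `b = (1 - 1/a)k + (a+1)/2` this is a contradiction. -/
theorem johnson_unburned_contradiction (n k : ℕ) (hk : 1 ≤ k) (hn : 2 * k ≤ n)
    (a : ℕ) (ha : a = ⌈(n : ℝ) / k⌉₊)
    (v : Fin a → Finset (Fin n)) (hv : ∀ i, (v i).card = k)
    (hcover : ∀ m : Fin n, ∃ i, m ∈ v i)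
    (b : ℝ) (x : Finset (Fin n)) (hx : x.card = k)
    (hlt : ∀ i : Fin a, ((x ∩ v i).card : ℝ) < k - b + ((i : ℕ) + 1)) :
    (k : ℝ) < a * (k - b) + a * (a + 1) / 2 ∧
      (b = (1 - 1 / (a : ℝ)) * k + ((a : ℝ) + 1) / 2 → False) :=
  johnson_unburned_contradiction_general n k hk a v hcover b x hx hlt
end

section
/- The burning number of the halved n-cube (1/2)H(n,2) is at most ⌈n/4⌉ + 1. -/
open Finset

/-! Since the halved-cube distance between even-weight words is half their Hamming distance,
burning the zero word first covers every word of weight at most `2c`, where `c = ⌈n/4⌉`.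
Burn second an even-weight word `w` differing from the all-ones word in at most one coordinate.
A remaining word `x` has even weight at least `2c + 2`, so it is within Hamming distance
`1 + (n - |x|) ≤ 2c - 1` of `w`, hence within `c - 1` of `w` in the graph. -/

section HammingZModTwo

variable {ι : Type*} [Fintype ι]

theorem natCast_hammingNorm_zmod_two (x : ι → ZMod 2) :
    (hammingNorm x : ZMod 2) = ∑ i, x i := by
  rw [hammingNorm, ← Finset.sum_boole]
  exact Finset.sum_congr rfl fun i _ => by generalize x i = a; revert a; decide

theorem natCast_hammingDist_zmod_two (x y : ι → ZMod 2) :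
    (hammingDist x y : ZMod 2) = ∑ i, x i + ∑ i, y i := by
  rw [hammingDist_eq_hammingNorm, natCast_hammingNorm_zmod_two]
  simp only [Pi.add_apply, Pi.neg_apply, Finset.sum_add_distrib,
    ZMod.neg_eq_self_mod_two]

theorem hammingDist_one_add_hammingNorm_zmod_two (x : ι → ZMod 2) :
    hammingDist 1 x + hammingNorm x = Fintype.card ι := by
  have hcompl :
      ({i | (1 : ι → ZMod 2) i ≠ x i} : Finset ι) = ({i | ¬ x i ≠ 0} : Finset ι) :=
    Finset.filter_congr fun i _ => by
      show (1 : ZMod 2) ≠ x i ↔ ¬ x i ≠ 0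
      generalize x i = a; revert a; decide
  rw [hammingDist, hammingNorm, hcompl, add_comm]
  exact Finset.card_filter_add_card_filter_not _

end HammingZModTwo

theorem exists_hammingDist_eq_two_of_two_le {ι β : Type*} [Fintype ι] [DecidableEq ι]
    [DecidableEq β] {x y : ι → β} (h : 2 ≤ hammingDist x y) :
    ∃ z, hammingDist x z = 2 ∧ hammingDist z y + 2 = hammingDist x y := by
  obtain ⟨i, hi, j, hj, hij⟩ := Finset.one_lt_card.mp h
  rw [Finset.mem_filter] at hi hj
  let z : ι → β := fun k => if k = i ∨ k = j then y k else x k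
  have hxz : ({k | x k ≠ z k} : Finset ι) = {i, j} := by
    ext k
    by_cases hki : k = i
    · subst hki; simp [z, hi.2]
    · by_cases hkj : k = j
      · subst hkj; simp [z, hj.2]
      · simp [z, hki, hkj]
  have hzy : ({k | z k ≠ y k} : Finset ι) = ({k | x k ≠ y k} : Finset ι) \ {i, j} := by
    ext k
    by_cases hki : k = i
    · subst hki; simp [z]
    · by_cases hkj : k = j
      · subst hkj; simp [z]
      · simp [z, hki, hkj]
  have hsub : ({i, j} : Finset ι) ⊆ ({k | x k ≠ y k} : Finset ι) := by
    simp [Finset.insert_subset_iff, hi.2, hj.2]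
  refine ⟨z, ?_, ?_⟩
  · rw [hammingDist, hxz, Finset.card_pair hij]
  · rw [hammingDist, hzy, Finset.card_sdiff_of_subset hsub, Finset.card_pair hij]
    exact Nat.sub_add_cancel h

section HalvedCube

variable {n : ℕ}

theorem halvedCube_two_dvd_hammingDist (x y : {x : Fin n → ZMod 2 // ∑ i, x i = 0}) :
    2 ∣ hammingDist x.1 y.1 := by
  rw [← ZMod.natCast_eq_zero_iff, natCast_hammingDist_zmod_two, x.2, y.2, add_zero]

theorem halvedCube_exists_adj_hammingDist_add_two (x y : {x : Fin n → ZMod 2 // ∑ i, x i = 0})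
    (h : 2 ≤ hammingDist x.1 y.1) :
    ∃ z, (halvedCubeGraph n).Adj x z ∧ hammingDist z.1 y.1 + 2 = hammingDist x.1 y.1 := by
  obtain ⟨z, hxz, hzy⟩ := exists_hammingDist_eq_two_of_two_le h
  have hz : ∑ i, z i = 0 := by
    have := natCast_hammingDist_zmod_two x.1 z
    rwa [hxz, x.2, zero_add, eq_comm] at this
  exact ⟨⟨z, hz⟩, hxz, hzy⟩

theorem halvedCube_exists_walk_of_hammingDist_eq (d : ℕ) :
    ∀ x y : {x : Fin n → ZMod 2 // ∑ i, x i = 0}, hammingDist x.1 y.1 = 2 * d →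
      ∃ w : (halvedCubeGraph n).Walk x y, w.length = d := by
  induction d with
  | zero =>
    intro x y h
    obtain rfl : x = y := Subtype.ext (hammingDist_eq_zero.mp h)
    exact ⟨.nil, rfl⟩
  | succ d ih =>
    intro x y h
    obtain ⟨z, hxz, hzy⟩ := halvedCube_exists_adj_hammingDist_add_two x y (by omega)
    obtain ⟨w, hw⟩ := ih z y (by omega)
    exact ⟨.cons hxz w, by rw [SimpleGraph.Walk.length_cons, hw]⟩

theorem halvedCube_two_mul_dist_le (x y : {x : Fin n → ZMod 2 // ∑ i, x i = 0}) :
    2 * (halvedCubeGraph n).dist x y ≤ hammingDist x.1 y.1 := by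
  obtain ⟨d, hd⟩ := halvedCube_two_dvd_hammingDist x y
  obtain ⟨w, hw⟩ := halvedCube_exists_walk_of_hammingDist_eq d x y hd
  have := SimpleGraph.dist_le w
  omega

end HalvedCube

theorem burningNumber_le_of_forall_dist_le {V : Type*} (G : SimpleGraph V) (u w : V) (k : ℕ)
    (h : ∀ x, G.dist u x ≤ k ∨ G.dist w x < k) : burningNumber G ≤ k + 1 := by
  refine Nat.sInf_le ⟨fun i => if (i : ℕ) = 1 then w else u, fun x => ?_⟩
  rcases h x with hu | hw
  · exact ⟨0, by simpa using hu⟩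
  · exact ⟨⟨1, by omega⟩, by simp only [if_true]; omega⟩

theorem exists_sum_eq_zero_hammingDist_one_le_one (n : ℕ) :
    ∃ w : Fin n → ZMod 2, ∑ i, w i = 0 ∧ hammingDist w 1 ≤ 1 := by
  let w : Fin n → ZMod 2 := fun k => if (k : ℕ) < 2 * (n / 2) then 1 else 0
  have hw_norm : hammingNorm w = 2 * (n / 2) := by
    have hsupp : ({k | w k ≠ 0} : Finset (Fin n)) =
        ({k | (k : ℕ) < 2 * (n / 2)} : Finset (Fin n)) := by
      ext k; by_cases hk : (k : ℕ) < 2 * (n / 2) <;> simp [w, hk]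
    rw [hammingNorm, hsupp, Fin.card_filter_val_lt]
    omega
  refine ⟨w, ?_, ?_⟩
  · rw [← natCast_hammingNorm_zmod_two, hw_norm, ZMod.natCast_eq_zero_iff]
    exact dvd_mul_right 2 _
  · have hw_one := hammingDist_one_add_hammingNorm_zmod_two w
    rw [hammingDist_comm, Fintype.card_fin] at hw_one
    omega

theorem halvedCube_burningNumber_le_general (n : ℕ) :
    burningNumber (halvedCubeGraph n) ≤ (n + 3) / 4 + 1 := by
  obtain ⟨w, hw_even, hw_one⟩ := exists_sum_eq_zero_hammingDist_one_le_one n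
  have h0_even : ∑ i, (0 : Fin n → ZMod 2) i = 0 := by simp
  refine burningNumber_le_of_forall_dist_le _ ⟨0, h0_even⟩ ⟨w, hw_even⟩ _ fun x => ?_
  have hx_even : 2 ∣ hammingNorm x.1 := by
    rw [← ZMod.natCast_eq_zero_iff, natCast_hammingNorm_zmod_two, x.2]
  have hx_one := hammingDist_one_add_hammingNorm_zmod_two x.1
  rw [Fintype.card_fin] at hx_one
  have h0 : 2 * (halvedCubeGraph n).dist ⟨0, h0_even⟩ x ≤ hammingNorm x.1 :=
    (hammingDist_zero_left (ι := Fin n) (β := fun _ => ZMod 2)) ▸ halvedCube_two_mul_dist_le _ x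
  have hw : 2 * (halvedCubeGraph n).dist ⟨w, hw_even⟩ x ≤ hammingDist w x.1 :=
    halvedCube_two_mul_dist_le _ x
  have htri := hammingDist_triangle w 1 x.1
  omega

/-- `burn((1/2)H(n,2)) ≤ ⌈n/4⌉ + 1`. -/
theorem halvedCube_burningNumber_le (n : ℕ) (hn : 2 ≤ n) :
    burningNumber (halvedCubeGraph n) ≤ (n + 3) / 4 + 1 :=
  halvedCube_burningNumber_le_general n
end

section
/- The burning number of the Hamming graph H(n,q) is at most ⌊(1 − 1/q)n + (q+1)/2⌋. -/
open Finset

/-!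
Burn the constant vectors `0, 1, …, q - 1` in this order. The distance from `x` to the constant
vector `j` is `n` minus the number of coordinates of `x` equal to `j`, so these distances sum to
`(q - 1) n`, and averaging `d(j, x) + j` over `j` gives some `j` with
`d(j, x) + j ≤ (1 - 1/q) n + (q - 1)/2 < b`: the fire lit at time `j + 1` reaches `x` in time.
When `b < q` there are not enough rounds for all constants, but then the bound forces `n < b`
and the first fire alone covers the whole graph.
-/

section HammingDist

variable {ι : Type*} [Fintype ι] [DecidableEq ι] {β : ι → Type*} [∀ i, DecidableEq (β i)]

theorem hammingDist_update_of_ne (x : ∀ i, β i) {i : ι} {a : β i} (h : x i ≠ a) :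
    hammingDist x (Function.update x i a) = 1 := by
  have : ({j | x j ≠ Function.update x i a j} : Finset ι) = {i} := by
    ext j
    by_cases hj : j = i
    · subst hj; simpa
    · simp [hj]
  rw [hammingDist, this, card_singleton]

theorem hammingDist_update_left_eq_sub_one (x y : ∀ i, β i) {i : ι} (h : x i ≠ y i) :
    hammingDist (Function.update x i (y i)) y = hammingDist x y - 1 := by
  have : ({j | Function.update x i (y i) j ≠ y j} : Finset ι) =
      ({j | x j ≠ y j} : Finset ι).erase i := by
    ext j
    by_cases hj : j = i
    · subst hj; simp
    · simp [hj]
  rw [hammingDist, this]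
  exact card_erase_of_mem (by simpa using h)

end HammingDist

section ConstDist

variable {ι α : Type*} [Fintype ι] [DecidableEq α]

theorem hammingDist_const_add_card_filter_eq (a : α) (x : ι → α) :
    hammingDist (fun _ => a) x + #{i | x i = a} = Fintype.card ι := by
  rw [add_comm, hammingDist]
  simp_rw [ne_comm (a := a)]
  exact card_filter_add_card_filter_not _

theorem sum_hammingDist_const_add_card [Fintype α] (x : ι → α) :
    ∑ a, hammingDist (fun _ => a) x + Fintype.card ι = Fintype.card α * Fintype.card ι := by
  have hfib : Fintype.card ι = ∑ a, #{i | x i = a} :=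
    card_eq_sum_card_fiberwise fun i _ => mem_univ (x i)
  conv_lhs => rw [hfib, ← sum_add_distrib]
  simp [hammingDist_const_add_card_filter_eq]

end ConstDist

theorem hammingGraph_exists_walk_length_eq {n q : ℕ} (x y : Fin n → Fin q) :
    ∃ w : (hammingGraph n q).Walk x y, w.length = hammingDist x y := by
  induction hd : hammingDist x y generalizing x with
  | zero =>
    obtain rfl := hammingDist_eq_zero.mp hd
    exact ⟨.nil, rfl⟩
  | succ d ih =>
    obtain ⟨i, hi⟩ := Function.ne_iff.mp (hammingDist_ne_zero.mp (by omega : hammingDist x y ≠ 0))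
    have hadj : (hammingGraph n q).Adj x (Function.update x i (y i)) :=
      hammingDist_update_of_ne x hi
    obtain ⟨w, hw⟩ := ih _ (by rw [hammingDist_update_left_eq_sub_one x y hi, hd]; rfl)
    exact ⟨.cons hadj w, by simp [hw]⟩

theorem hammingGraph_dist_le {n q : ℕ} (x y : Fin n → Fin q) :
    (hammingGraph n q).dist x y ≤ hammingDist x y := by
  obtain ⟨w, hw⟩ := hammingGraph_exists_walk_length_eq x y
  exact hw ▸ SimpleGraph.dist_le w

theorem exists_hammingDist_const_add_le {ι : Type*} [Fintype ι] {q : ℕ} (hq : 0 < q)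
    (x : ι → Fin q) :
    ∃ j : Fin q, q * (2 * (hammingDist (fun _ => j) x + j)) + 2 * Fintype.card ι + q ≤
      2 * q * Fintype.card ι + q * q := by
  have hsum : ∑ j : Fin q, 2 * (hammingDist (fun _ => j) x + j) + 2 * Fintype.card ι + q =
      2 * q * Fintype.card ι + q * q := by
    have hdist := sum_hammingDist_const_add_card x
    have hgauss : (∑ j : Fin q, (j : ℕ)) * 2 = q * (q - 1) := by
      rw [Fin.sum_univ_eq_sum_range (fun i => i) q, sum_range_id_mul_two]
    have hq1 : q * (q - 1) + q = q * q := by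
      rw [Nat.mul_sub_one, Nat.sub_add_cancel (Nat.le_mul_self q)]
    rw [Fintype.card_fin] at hdist
    rw [← mul_sum, sum_add_distrib]
    linarith
  obtain ⟨j, -, hj⟩ := exists_le_of_sum_le (univ_nonempty_iff.mpr ⟨⟨0, hq⟩⟩)
    (f := fun j : Fin q => q * (2 * (hammingDist (fun _ => j) x + j)))
    (g := fun _ => ∑ j : Fin q, 2 * (hammingDist (fun _ => j) x + j))
    (by simp [mul_sum])
  exact ⟨j, by omega⟩

/-- `b > (1 - 1/q) n + (q - 1)/2` for `b` the floor below, cleared of denominators. -/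
theorem two_mul_mul_add_mul_self_lt_floor (n q : ℕ) (hq : 0 < q) :
    2 * q * n + q * q < 2 * q * ⌊(1 - 1 / (q : ℝ)) * n + ((q : ℝ) + 1) / 2⌋₊ + 2 * n + q := by
  set t := (1 - 1 / (q : ℝ)) * n + ((q : ℝ) + 1) / 2
  have hscale : 2 * q * t = 2 * q * n + q * q + q - 2 * n := by
    simp only [t]
    field_simp
    ring
  have hlt := mul_lt_mul_of_pos_left (Nat.lt_floor_add_one t)
    (by positivity : (0 : ℝ) < 2 * q)
  have : (2 * q * n + q * q : ℝ) < 2 * q * ⌊t⌋₊ + 2 * n + q := by linarith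
  exact_mod_cast this

theorem exists_const_hammingDist_add_lt {n q b : ℕ} (hq : 2 ≤ q)
    (hb : 2 * q * n + q * q < 2 * q * b + 2 * n + q) (x : Fin n → Fin q) :
    ∃ j : Fin q, (j : ℕ) < b ∧ hammingDist (fun _ => j) x + j < b := by
  by_cases hqb : q ≤ b
  · obtain ⟨j, hj⟩ := exists_hammingDist_const_add_le (by omega) x
    rw [Fintype.card_fin] at hj
    refine ⟨j, by omega, ?_⟩
    by_contra! hbj
    have := Nat.mul_le_mul_left q hbj
    linarith
  · have hnb : n < b := by nlinarith
    refine ⟨⟨0, by omega⟩, Nat.zero_lt_of_lt hnb, ?_⟩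
    have : hammingDist (fun _ => (⟨0, by omega⟩ : Fin q)) x ≤ n :=
      hammingDist_le_card_fintype.trans_eq (Fintype.card_fin n)
    simp only [add_zero]
    omega

theorem isBurningSeq_hammingGraph_const {n q b : ℕ} (hq : 2 ≤ q)
    (hb : 2 * q * n + q * q < 2 * q * b + 2 * n + q) :
    IsBurningSeq (hammingGraph n q)
      (fun (i : Fin b) _ => (⟨i % q, Nat.mod_lt _ (by omega)⟩ : Fin q)) := by
  intro x
  obtain ⟨j, hjb, hj⟩ := exists_const_hammingDist_add_lt hq hb x
  refine ⟨⟨j, hjb⟩, ?_⟩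
  simp only [Nat.mod_eq_of_lt j.2, Fin.eta]
  have := hammingGraph_dist_le (fun _ => j) x
  omega

theorem hamming_burningNumber_le_general (n q : ℕ) (hq : 2 ≤ q) :
    burningNumber (hammingGraph n q) ≤ ⌊(1 - 1 / (q : ℝ)) * n + ((q : ℝ) + 1) / 2⌋₊ :=
  Nat.sInf_le ⟨_, isBurningSeq_hammingGraph_const hq
    (two_mul_mul_add_mul_self_lt_floor n q (by omega))⟩

/-- `burn(H(n,q)) ≤ ⌊(1 - 1/q)n + (q+1)/2⌋`. -/
theorem hamming_burningNumber_le (n q : ℕ) (hn : 1 ≤ n) (hq : 2 ≤ q) :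
    burningNumber (hammingGraph n q) ≤ ⌊(1 - 1 / (q : ℝ)) * n + ((q : ℝ) + 1) / 2⌋₊ :=
  hamming_burningNumber_le_general n q hq
end

section
/- For the cycle C_n, the sequence v_j = (2⌈√n⌉ + 1)j − j² mod n, for j = 1,…,⌈√n⌉, is a burning sequence, so the burning number of C_n is at most ⌈√n⌉. -/
open Finset

/-! With `b = ⌈√n⌉`, the `j`-th fire (burned at time `j`, `k = b - j` remaining) is centred at
`(2b+1)j - j² = b + b² - k² - k` and covers the integer window `[b + b² - (k+1)² + 1, b + b² - k²]`.
For `k = 0, …, b-1` these windows tile `[b + 1, b + b²]`, an interval of `b² ≥ n` consecutive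
integers, hence one containing a representative of every residue mod `n`. -/

open SimpleGraph

theorem cycleGraphZMod_exists_walk_length {n : ℕ} (hn : n ≠ 1) (a : ZMod n) (k : ℕ) :
    ∃ w : (cycleGraphZMod n).Walk a (a + k), w.length = k := by
  have : Nontrivial (ZMod n) := ZMod.nontrivial_iff.2 hn
  induction k generalizing a with
  | zero => exact ⟨Walk.nil.copy rfl (by simp), by simp⟩
  | succ k ih =>
    obtain ⟨w, hw⟩ := ih (a + 1)
    have hadj : (cycleGraphZMod n).Adj a (a + 1) :=
      ⟨fun h => one_ne_zero (left_eq_add.mp h), Or.inr (by ring)⟩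
    exact ⟨(Walk.cons hadj w).copy rfl (by push_cast; ring), by simp [hw]⟩

theorem cycleGraphZMod_dist_add_natCast_le (n : ℕ) (a : ZMod n) (k : ℕ) :
    (cycleGraphZMod n).dist a (a + k) ≤ k := by
  rcases eq_or_ne n 1 with rfl | hn
  · simp [Subsingleton.elim (a + k) a]
  · obtain ⟨w, hw⟩ := cycleGraphZMod_exists_walk_length hn a k
    exact (dist_le w).trans_eq hw

theorem cycleGraphZMod_dist_natCast_le {n c m k : ℕ} (hmc : m ≤ c + k) (hcm : c ≤ m + k) :
    (cycleGraphZMod n).dist (c : ZMod n) (m : ZMod n) ≤ k := by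
  rcases le_total c m with h | h
  · obtain ⟨t, rfl⟩ := Nat.exists_eq_add_of_le h
    have := cycleGraphZMod_dist_add_natCast_le n c t
    push_cast
    omega
  · obtain ⟨t, rfl⟩ := Nat.exists_eq_add_of_le h
    have := cycleGraphZMod_dist_add_natCast_le n m t
    rw [dist_comm]
    push_cast
    omega

theorem ZMod.exists_natCast_eq_of_le_of_lt_add {n : ℕ} [NeZero n] (a : ℕ) (x : ZMod n) :
    ∃ m : ℕ, a ≤ m ∧ m < a + n ∧ (m : ZMod n) = x := by
  refine ⟨a + (x - a).val, by omega, ?_, by simp⟩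
  have := ZMod.val_lt (x - (a : ZMod n))
  omega

/-- Indices start at `0`: this is the vertex burned at time `j + 1`. -/
def cycleBurningCenter (b j : ℕ) : ℕ :=
  (2 * b + 1) * (j + 1) - (j + 1) ^ 2

theorem cycleBurningCenter_add_sq (b k : ℕ) (hk : k < b) :
    cycleBurningCenter b (b - 1 - k) + k + k ^ 2 = b + b ^ 2 := by
  obtain ⟨j, rfl⟩ : ∃ j, b = k + j + 1 := ⟨b - k - 1, by omega⟩
  have hj : k + j + 1 - 1 - k = j := by omega
  have hsplit : (2 * (k + j + 1) + 1) * (j + 1) = (j + 1) ^ 2 + (j + 1) * (j + 2 * k + 2) := by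
    ring
  rw [cycleBurningCenter, hj, hsplit, Nat.add_sub_cancel_left]
  ring

theorem exists_cycleBurningCenter_near {b m : ℕ} (hbm : b < m) (hm : m ≤ b + b ^ 2) :
    ∃ j < b, m ≤ cycleBurningCenter b j + (b - 1 - j) ∧
      cycleBurningCenter b j ≤ m + (b - 1 - j) := by
  set k := Nat.sqrt (b + b ^ 2 - m)
  have hk_le : k ^ 2 ≤ b + b ^ 2 - m := Nat.sqrt_le' _
  have hk_lt : b + b ^ 2 - m < (k + 1) ^ 2 := Nat.lt_succ_sqrt' _
  have hkb : k < b := Nat.sqrt_lt'.2 (by omega)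
  have hc := cycleBurningCenter_add_sq b k hkb
  have hsq : (k + 1) ^ 2 = k ^ 2 + 2 * k + 1 := by ring
  refine ⟨b - 1 - k, by omega, ?_⟩
  rw [show b - 1 - (b - 1 - k) = k by omega]
  omega

theorem le_natCeil_sqrt_sq (n : ℕ) : n ≤ ⌈Real.sqrt n⌉₊ ^ 2 := by
  have h := (Real.sqrt_le_left (Nat.cast_nonneg _)).1 (Nat.le_ceil (Real.sqrt n))
  exact_mod_cast h

/-- For the cycle `C_n`, the sequence `v_j = (2⌈√n⌉+1)j - j²` (mod `n`),
`j = 1, …, ⌈√n⌉`, is a burning sequence, so `burn(C_n) ≤ ⌈√n⌉`. -/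
theorem cycle_burning (n : ℕ) (hn : 1 ≤ n) :
    IsBurningSeq (cycleGraphZMod n)
      (fun j : Fin ⌈Real.sqrt n⌉₊ =>
        (((2 * ⌈Real.sqrt n⌉₊ + 1) * ((j : ℕ) + 1) - ((j : ℕ) + 1) ^ 2 : ℕ) : ZMod n)) ∧
    burningNumber (cycleGraphZMod n) ≤ ⌈Real.sqrt n⌉₊ := by
  set b := ⌈Real.sqrt n⌉₊
  have hnb : n ≤ b ^ 2 := le_natCeil_sqrt_sq n
  have : NeZero n := ⟨by omega⟩
  have hseq : IsBurningSeq (cycleGraphZMod n)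
      (fun j : Fin b => (cycleBurningCenter b j : ZMod n)) := by
    intro x
    obtain ⟨m, hm_ge, hm_lt, rfl⟩ := ZMod.exists_natCast_eq_of_le_of_lt_add (b + 1) x
    obtain ⟨j, hjb, hmc, hcm⟩ := exists_cycleBurningCenter_near (b := b) (m := m) (by omega)
      (by omega)
    exact ⟨⟨j, hjb⟩, cycleGraphZMod_dist_natCast_le hmc hcm⟩
  exact ⟨hseq, Nat.sInf_le ⟨_, hseq⟩⟩
end
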